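/- If a function f is analytic in a disc |x|<R with R>1, satisfies f(x)f(y+1) - f(y)f(x+1) = f(x-y) for all x,y, and is not identically zero, then there exists a complex number η such that f(x) = sinh(ηx)/sinh(η) (interpreted as f(x)=x when η=0). -/

import Mathlib

/-!
Putting `y = 0` gives `f 0 = 0` and `f x * f 1 = f x`, so `f 1 = 1` unless `f` vanishes near `0`
(and then, by the identity theorem, on the whole disc). Differentiating twice in `y` at `y = 0`
gives `f'' = f''(1) f` near `0`; writing `f''(1) = η²`, the Taylor coefficients of `f` at `0` obey
the same two-step recursion as those of `f'(0) sinh(η z) / η` (read as `f'(0) z` when `η = 0`),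
so the two functions agree near `0` and hence on the disc. Evaluating at `1` fixes `f'(0)`.
-/

open Metric Filter Topology

section SecondOrderLinearODE

variable {𝕜 : Type*} [NontriviallyNormedField 𝕜]

theorem AnalyticAt.eventuallyEq_of_iteratedDeriv_eq [CharZero 𝕜] {E : Type*}
    [NormedAddCommGroup E] [NormedSpace 𝕜 E] [CompleteSpace E] {f g : 𝕜 → E} {x : 𝕜}
    (hf : AnalyticAt 𝕜 f x) (hg : AnalyticAt 𝕜 g x)
    (h : ∀ n, iteratedDeriv n f x = iteratedDeriv n g x) : f =ᶠ[𝓝 x] g := by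
  have hsub : ∀ n, iteratedDeriv n (f - g) x = 0 := fun n => by
    rw [iteratedDeriv_sub hf.contDiffAt hg.contDiffAt, h n, sub_self]
  have htop : analyticOrderAt (f - g) x = ⊤ :=
    ENat.eq_top_iff_forall_ge.2 fun n =>
      (natCast_le_analyticOrderAt_iff_iteratedDeriv_eq_zero (hf.sub hg)).2 fun i _ => hsub i
  filter_upwards [analyticOrderAt_eq_top.1 htop] with z hz
  exact sub_eq_zero.1 hz

theorem iteratedDeriv_add_two_eq_mul {f : 𝕜 → 𝕜} {x μ : 𝕜}
    (h : iteratedDeriv 2 f =ᶠ[𝓝 x] fun z => μ * f z) (n : ℕ) :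
    iteratedDeriv (n + 2) f x = μ * iteratedDeriv n f x := by
  rw [iteratedDeriv_eq_iterate, Function.iterate_add_apply, ← iteratedDeriv_eq_iterate,
    ← iteratedDeriv_eq_iterate, h.iteratedDeriv_eq, iteratedDeriv_const_mul_field]

theorem iteratedDeriv_eq_of_iteratedDeriv_two_eq_mul {f g : 𝕜 → 𝕜} {x μ : 𝕜}
    (hf : iteratedDeriv 2 f =ᶠ[𝓝 x] fun z => μ * f z)
    (hg : iteratedDeriv 2 g =ᶠ[𝓝 x] fun z => μ * g z)
    (h₀ : f x = g x) (h₁ : deriv f x = deriv g x) (n : ℕ) :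
    iteratedDeriv n f x = iteratedDeriv n g x := by
  induction n using Nat.twoStepInduction with
  | zero => simpa
  | one => simpa
  | more n ih _ => rw [iteratedDeriv_add_two_eq_mul hf, iteratedDeriv_add_two_eq_mul hg, ih]

theorem AnalyticAt.eventuallyEq_of_iteratedDeriv_two_eq_mul [CharZero 𝕜] [CompleteSpace 𝕜]
    {f g : 𝕜 → 𝕜} {x μ : 𝕜} (hfa : AnalyticAt 𝕜 f x) (hga : AnalyticAt 𝕜 g x)
    (hf : iteratedDeriv 2 f =ᶠ[𝓝 x] fun z => μ * f z)
    (hg : iteratedDeriv 2 g =ᶠ[𝓝 x] fun z => μ * g z)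
    (h₀ : f x = g x) (h₁ : deriv f x = deriv g x) : f =ᶠ[𝓝 x] g :=
  hfa.eventuallyEq_of_iteratedDeriv_eq hga
    (iteratedDeriv_eq_of_iteratedDeriv_two_eq_mul hf hg h₀ h₁)

end SecondOrderLinearODE

noncomputable def sinhDiv (η z : ℂ) : ℂ := if η = 0 then z else Complex.sinh (η * z) / η

theorem sinhDiv_zero_left : sinhDiv 0 = fun z => z := by
  funext z; simp [sinhDiv]

theorem sinhDiv_of_ne_zero {η : ℂ} (hη : η ≠ 0) :
    sinhDiv η = fun z => Complex.sinh (η * z) / η := by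
  funext z; simp [sinhDiv, hη]

theorem differentiable_sinhDiv (η : ℂ) : Differentiable ℂ (sinhDiv η) := by
  rcases eq_or_ne η 0 with rfl | hη
  · rw [sinhDiv_zero_left]; exact differentiable_id
  · rw [sinhDiv_of_ne_zero hη]; fun_prop

theorem sinhDiv_apply_zero (η : ℂ) : sinhDiv η 0 = 0 := by
  simp [sinhDiv]

theorem deriv_sinhDiv_zero (η : ℂ) : deriv (sinhDiv η) 0 = 1 := by
  rcases eq_or_ne η 0 with rfl | hη
  · simp [sinhDiv_zero_left]
  · rw [sinhDiv_of_ne_zero hη, ← iteratedDeriv_one, iteratedDeriv_div_const,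
      iteratedDeriv_comp_const_mul Complex.contDiff_sinh]
    simp [hη]

theorem iteratedDeriv_two_sinhDiv (η : ℂ) :
    iteratedDeriv 2 (sinhDiv η) = fun z => η ^ 2 * sinhDiv η z := by
  rcases eq_or_ne η 0 with rfl | hη
  · simp [sinhDiv_zero_left, iteratedDeriv_succ]
  · funext z
    rw [sinhDiv_of_ne_zero hη, iteratedDeriv_div_const,
      iteratedDeriv_comp_const_mul Complex.contDiff_sinh]
    simp [iteratedDeriv_succ, mul_div_assoc]

theorem sinhDiv_div_sinhDiv_one (η x : ℂ) :
    sinhDiv η x / sinhDiv η 1 =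
      if η = 0 then x else Complex.sinh (η * x) / Complex.sinh η := by
  rcases eq_or_ne η 0 with rfl | hη
  · simp [sinhDiv]
  · simp only [sinhDiv, if_neg hη, mul_one]
    exact div_div_div_cancel_right₀ hη _ _

section FunctionalEquation

variable {f : ℂ → ℂ}

theorem map_zero_of_eventually_funEq
    (heq : ∀ᶠ p : ℂ × ℂ in 𝓝 (0, 0),
      f p.1 * f (p.2 + 1) - f p.2 * f (p.1 + 1) = f (p.1 - p.2)) :
    f 0 = 0 := by
  simpa [eq_comm] using heq.self_of_nhds

theorem map_one_of_eventually_funEq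
    (heq : ∀ᶠ p : ℂ × ℂ in 𝓝 (0, 0),
      f p.1 * f (p.2 + 1) - f p.2 * f (p.1 + 1) = f (p.1 - p.2))
    (hne : ¬ f =ᶠ[𝓝 0] 0) : f 1 = 1 := by
  by_contra h₁
  apply hne
  have hy₀ : Tendsto (fun x : ℂ => (x, (0 : ℂ))) (𝓝 0) (𝓝 (0, 0)) :=
    (continuous_id.prodMk continuous_const).tendsto' _ _ rfl
  filter_upwards [hy₀.eventually heq] with x hx
  have hx' : f x * (f 1 - 1) = 0 := by
    simp only [zero_add, map_zero_of_eventually_funEq heq, sub_zero, zero_mul] at hx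
    linear_combination hx
  simpa [sub_eq_zero, h₁] using hx'

theorem eventually_iteratedDeriv_two_eq_of_funEq (hf₀ : ContDiffAt ℂ 2 f 0)
    (hf₁ : ContDiffAt ℂ 2 f 1)
    (heq : ∀ᶠ p : ℂ × ℂ in 𝓝 (0, 0),
      f p.1 * f (p.2 + 1) - f p.2 * f (p.1 + 1) = f (p.1 - p.2)) :
    ∀ᶠ x in 𝓝 0,
      iteratedDeriv 2 f x = f x * iteratedDeriv 2 f 1 - iteratedDeriv 2 f 0 * f (x + 1) := by
  rw [nhds_prod_eq] at heq
  filter_upwards [heq.curry] with x hx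
  have hshift : ContDiffAt ℂ 2 (fun y => f (y + 1)) 0 :=
    (by simpa using hf₁ : ContDiffAt ℂ 2 f (0 + 1)).comp 0 (contDiffAt_id.add contDiffAt_const)
  have key := Filter.EventuallyEq.iteratedDeriv_eq 2 hx
  rw [iteratedDeriv_fun_sub (contDiffAt_const.mul hshift) (hf₀.mul contDiffAt_const)] at key
  simpa [iteratedDeriv_comp_add_const, iteratedDeriv_comp_const_sub] using key.symm

theorem eventually_iteratedDeriv_two_eq_mul_of_funEq (hf₀ : ContDiffAt ℂ 2 f 0)
    (hf₁ : ContDiffAt ℂ 2 f 1)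
    (heq : ∀ᶠ p : ℂ × ℂ in 𝓝 (0, 0),
      f p.1 * f (p.2 + 1) - f p.2 * f (p.1 + 1) = f (p.1 - p.2))
    (hne : ¬ f =ᶠ[𝓝 0] 0) :
    iteratedDeriv 2 f =ᶠ[𝓝 0] fun x => iteratedDeriv 2 f 1 * f x := by
  have hODE := eventually_iteratedDeriv_two_eq_of_funEq hf₀ hf₁ heq
  have h₀ := map_zero_of_eventually_funEq heq
  have h₁ := map_one_of_eventually_funEq heq hne
  -- at `x = 0` the equation reads `f'' 0 = - f'' 0`
  have hf''₀ : iteratedDeriv 2 f 0 = 0 := by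
    have := hODE.self_of_nhds
    rw [h₀, zero_add, h₁] at this
    linear_combination this / 2
  filter_upwards [hODE] with x hx
  rw [hx, hf''₀]
  ring

theorem exists_eventuallyEq_mul_sinhDiv_of_funEq (hf₀ : AnalyticAt ℂ f 0)
    (hf₁ : AnalyticAt ℂ f 1)
    (heq : ∀ᶠ p : ℂ × ℂ in 𝓝 (0, 0),
      f p.1 * f (p.2 + 1) - f p.2 * f (p.1 + 1) = f (p.1 - p.2))
    (hne : ¬ f =ᶠ[𝓝 0] 0) :
    ∃ η c : ℂ, f =ᶠ[𝓝 0] fun x => c * sinhDiv η x := by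
  obtain ⟨η, hη⟩ := IsAlgClosed.exists_pow_nat_eq (iteratedDeriv 2 f 1) two_pos
  have hODE : iteratedDeriv 2 f =ᶠ[𝓝 0] fun x => η ^ 2 * f x := by
    rw [hη]
    exact eventually_iteratedDeriv_two_eq_mul_of_funEq hf₀.contDiffAt hf₁.contDiffAt heq hne
  refine ⟨η, deriv f 0, hf₀.eventuallyEq_of_iteratedDeriv_two_eq_mul
    (((differentiable_sinhDiv η).const_mul _).analyticAt 0) hODE ?_ ?_ ?_⟩
  · refine .of_forall fun x => ?_
    simp only [iteratedDeriv_const_mul_field, iteratedDeriv_two_sinhDiv]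
    ring
  · simp [map_zero_of_eventually_funEq heq, sinhDiv_apply_zero]
  · simp [deriv_sinhDiv_zero]

end FunctionalEquation

theorem stmt0 (R : ℝ) (hR : 1 < R) (f : ℂ → ℂ)
    (hf : AnalyticOn ℂ f (ball (0 : ℂ) R))
    (heq : ∀ x y : ℂ, x ∈ ball (0 : ℂ) R → y ∈ ball (0 : ℂ) R →
      x + 1 ∈ ball (0 : ℂ) R → y + 1 ∈ ball (0 : ℂ) R → x - y ∈ ball (0 : ℂ) R →
      f x * f (y + 1) - f y * f (x + 1) = f (x - y))
    (hne : ∃ x ∈ ball (0 : ℂ) R, f x ≠ 0) :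
    ∃ η : ℂ, ∀ x ∈ ball (0 : ℂ) R,
      f x = if η = 0 then x else Complex.sinh (η * x) / Complex.sinh η := by
  have hfa : AnalyticOnNhd ℂ f (ball 0 R) := isOpen_ball.analyticOn_iff_analyticOnNhd.1 hf
  have h₀ : (0 : ℂ) ∈ ball (0 : ℂ) R := mem_ball_self (by linarith)
  have h₁ : (1 : ℂ) ∈ ball (0 : ℂ) R := by simpa using hR
  have hloc : ∀ᶠ p : ℂ × ℂ in 𝓝 (0, 0),
      f p.1 * f (p.2 + 1) - f p.2 * f (p.1 + 1) = f (p.1 - p.2) := by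
    have hmem (g : ℂ × ℂ → ℂ) (hg : Continuous g) (h : g (0, 0) ∈ ball (0 : ℂ) R) :
        ∀ᶠ p in 𝓝 (0, 0), g p ∈ ball (0 : ℂ) R :=
      hg.continuousAt.eventually_mem (isOpen_ball.mem_nhds h)
    filter_upwards [hmem Prod.fst continuous_fst h₀, hmem Prod.snd continuous_snd h₀,
      hmem (·.1 + 1) (by fun_prop) (by simpa using h₁),
      hmem (·.2 + 1) (by fun_prop) (by simpa using h₁),
      hmem (fun p => p.1 - p.2) (by fun_prop) (by simpa using h₀)] with p hx hy hx₁ hy₁ hxy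
    exact heq _ _ hx hy hx₁ hy₁ hxy
  have hne₀ : ¬ f =ᶠ[𝓝 0] 0 := fun h => by
    obtain ⟨x, hx, hfx⟩ := hne
    exact hfx (hfa.eqOn_zero_of_preconnected_of_eventuallyEq_zero
      (convex_ball 0 R).isPreconnected h₀ h hx)
  obtain ⟨η, c, hfc⟩ :=
    exists_eventuallyEq_mul_sinhDiv_of_funEq (hfa 0 h₀) (hfa 1 h₁) hloc hne₀
  have hglob : Set.EqOn f (fun x => c * sinhDiv η x) (ball 0 R) :=
    hfa.eqOn_of_preconnected_of_eventuallyEq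
      (fun z _ => ((differentiable_sinhDiv η).const_mul c).analyticAt z)
      (convex_ball 0 R).isPreconnected h₀ hfc
  have hc : c * sinhDiv η 1 = 1 :=
    (hglob h₁).symm.trans (map_one_of_eventually_funEq hloc hne₀)
  refine ⟨η, fun x hx => ?_⟩
  rw [hglob hx, ← sinhDiv_div_sinhDiv_one, eq_div_iff (right_ne_zero_of_mul_eq_one hc)]
  linear_combination sinhDiv η x * hc
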